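/- (Gallager bound for ε-almost universal_2 families) Let P^n be the n-fold i.i.d. binary-symmetric error distribution with crossover probability p, and let {C_r} be an ε-almost universal_2 code family in F_2^n with maximum dimension t_max = nR. Then the average maximum-likelihood decoding error probability satisfies E_r[P_e(C_r)] ≤ min_{0 ≤ s ≤ 1} ε^s · 2^{-n(-sR + E_0(s,p))}, where E_0(s,p) = s - log₂[p^{1/(1+s)} + (1-p)^{1/(1+s)}]^{1+s}. -/
import Mathlib


open scoped Classical

noncomputable def wt {n : ℕ} (x : Fin n → ZMod 2) : ℕ :=
  (Finset.univ.filter (fun i => x i ≠ 0)).card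

/-- The i.i.d. binary symmetric error distribution with crossover probability `p`. -/
noncomputable def Pn (p : ℝ) {n : ℕ} (x : Fin n → ZMod 2) : ℝ :=
  p ^ wt x * (1 - p) ^ (n - wt x)

/-- Optimal (maximum-likelihood) decoding error probability of the linear code `C` over the
additive channel with error distribution `Pn p`, when a uniformly random codeword is sent:
the infimum over all decoders of the average error probability. -/
noncomputable def Pe (p : ℝ) {n : ℕ} (C : Submodule (ZMod 2) (Fin n → ZMod 2)) : ℝ :=
  sInf { e : ℝ | ∃ dec : (Fin n → ZMod 2) → (Fin n → ZMod 2),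
    e = (1 / (Nat.card C : ℝ)) * ∑ w : C, ∑ x : Fin n → ZMod 2,
      (if dec ((w : Fin n → ZMod 2) + x) ≠ (w : Fin n → ZMod 2) then Pn p x else 0) }

/-- Gallager's function `E₀(s,p)` for the binary symmetric channel. -/
noncomputable def E0 (s p : ℝ) : ℝ :=
  s - Real.logb 2 ((p ^ (1 / (1 + s)) + (1 - p) ^ (1 / (1 + s))) ^ (1 + s))

/-! ### Auxiliary lemmas -/

lemma zmod2_add_self {n : ℕ} (v : Fin n → ZMod 2) : v + v = 0 := by
  funext i; have : ∀ a : ZMod 2, a + a = 0 := by decide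
  exact this (v i)

lemma Pn_nonneg {p : ℝ} (hp0 : 0 ≤ p) (hp1 : p ≤ 1) {n : ℕ} (x : Fin n → ZMod 2) :
    0 ≤ Pn p x := by
  have hq : (0:ℝ) ≤ 1 - p := by linarith
  exact mul_nonneg (pow_nonneg hp0 _) (pow_nonneg hq _)

lemma pow_rpow' {c : ℝ} (hc : 0 ≤ c) (k : ℕ) (a : ℝ) : (c ^ k) ^ a = (c ^ a) ^ k := by
  rw [← Real.rpow_natCast c k, ← Real.rpow_mul hc, mul_comm, Real.rpow_mul hc,
    Real.rpow_natCast]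

lemma zmod2_sum (f : ZMod 2 → ℝ) : ∑ v : ZMod 2, f v = f 0 + f 1 := by
  have : (Finset.univ : Finset (ZMod 2)) = {0, 1} := by decide
  rw [this, Finset.sum_pair (by decide)]

lemma sum_Pn_rpow {p : ℝ} (hp0 : 0 ≤ p) (hp1 : p ≤ 1) {n : ℕ} {a : ℝ} (ha : 0 < a) :
    ∑ x : Fin n → ZMod 2, Pn p x ^ a = (p ^ a + (1 - p) ^ a) ^ n := by
  have hq : (0:ℝ) ≤ 1 - p := by linarith
  have key : ∀ x : Fin n → ZMod 2,
      Pn p x ^ a = ∏ i, (if x i ≠ 0 then p ^ a else (1 - p) ^ a) := by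
    intro x
    rw [Finset.prod_ite, Finset.prod_const, Finset.prod_const]
    have hcard : (Finset.univ.filter (fun i => ¬ x i ≠ 0)).card = n - wt x := by
      have := Finset.card_filter_add_card_filter_not
        (s := (Finset.univ : Finset (Fin n))) (p := fun i => x i ≠ 0)
      simp only [Finset.card_univ, Fintype.card_fin] at this
      have hwt : wt x = (Finset.univ.filter (fun i => x i ≠ 0)).card := rfl
      omega
    rw [hcard]
    show Pn p x ^ a = (p ^ a) ^ (wt x) * ((1-p) ^ a) ^ (n - wt x)
    rw [Pn, Real.mul_rpow (by positivity) (by positivity), pow_rpow' hp0, pow_rpow' hq]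
  simp_rw [key]
  rw [← Fintype.prod_sum (fun _ (v : ZMod 2) => if v ≠ 0 then p ^ a else (1-p) ^ a)]
  rw [Finset.prod_congr rfl (fun i _ => zmod2_sum _)]
  rw [add_comm]
  simp

/-- the ML decoder -/
noncomputable def mld (p : ℝ) {n : ℕ} (C : Submodule (ZMod 2) (Fin n → ZMod 2))
    (y : Fin n → ZMod 2) : C :=
  (Finset.exists_max_image (Finset.univ : Finset C)
    (fun c => Pn p (y + (c : Fin n → ZMod 2))) ⟨0, Finset.mem_univ _⟩).choose

lemma mld_spec (p : ℝ) {n : ℕ} (C : Submodule (ZMod 2) (Fin n → ZMod 2))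
    (y : Fin n → ZMod 2) (c : C) :
    Pn p (y + (c : Fin n → ZMod 2)) ≤ Pn p (y + (mld p C y : Fin n → ZMod 2)) := by
  have h := (Finset.exists_max_image (Finset.univ : Finset C)
    (fun c => Pn p (y + (c : Fin n → ZMod 2))) ⟨0, Finset.mem_univ _⟩).choose_spec
  exact h.2 c (Finset.mem_univ _)

lemma gallager {p : ℝ} (hp0 : 0 ≤ p) (hp1 : p ≤ 1) {n : ℕ}
    (C : Submodule (ZMod 2) (Fin n → ZMod 2)) {s : ℝ} (hs0 : 0 ≤ s) :
    Pe p C ≤ ∑ x : Fin n → ZMod 2, Pn p x ^ (1/(1+s)) *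
      (∑ c : C, if (c : Fin n → ZMod 2) ≠ 0
        then Pn p (x + (c : Fin n → ZMod 2)) ^ (1/(1+s)) else 0) ^ s := by
  set a : ℝ := 1/(1+s) with ha_def
  have hs1 : (0:ℝ) < 1 + s := by linarith
  have ha : 0 < a := by positivity
  set dec : (Fin n → ZMod 2) → (Fin n → ZMod 2) := fun y => (mld p C y : Fin n → ZMod 2)
    with hdec
  have h1 : Pe p C ≤ (1 / (Nat.card C : ℝ)) * ∑ w : C, ∑ x : Fin n → ZMod 2,
      (if dec ((w : Fin n → ZMod 2) + x) ≠ (w : Fin n → ZMod 2) then Pn p x else 0) := by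
    apply csInf_le
    · refine ⟨0, fun e he => ?_⟩
      obtain ⟨d, rfl⟩ := he
      refine mul_nonneg (by positivity) (Finset.sum_nonneg fun w _ =>
        Finset.sum_nonneg fun x _ => ?_)
      split <;> [exact Pn_nonneg hp0 hp1 _; rfl]
    · exact ⟨dec, rfl⟩
  refine h1.trans ?_
  have key : ∀ (w : C) (x : Fin n → ZMod 2),
      (if dec ((w : Fin n → ZMod 2) + x) ≠ (w : Fin n → ZMod 2) then Pn p x else 0) ≤
      Pn p x ^ a *
        (∑ c : C, if (c : Fin n → ZMod 2) ≠ 0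
          then Pn p (x + (c : Fin n → ZMod 2)) ^ a else 0) ^ s := by
    intro w x
    have hT0 : (0:ℝ) ≤ ∑ c : C, if (c : Fin n → ZMod 2) ≠ 0
        then Pn p (x + (c : Fin n → ZMod 2)) ^ a else 0 :=
      Finset.sum_nonneg fun c _ => by
        split <;> [exact Real.rpow_nonneg (Pn_nonneg hp0 hp1 _) _; rfl]
    have hRHS : (0:ℝ) ≤ Pn p x ^ a * (∑ c : C,
        if (c : Fin n → ZMod 2) ≠ 0 then Pn p (x + (c : Fin n → ZMod 2)) ^ a else 0) ^ s :=
      mul_nonneg (Real.rpow_nonneg (Pn_nonneg hp0 hp1 _) _) (Real.rpow_nonneg hT0 _)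
    split
    case isFalse => exact hRHS
    case isTrue h =>
      rcases eq_or_lt_of_le (Pn_nonneg hp0 hp1 (n := n) x) with hx | hx
      · exact le_trans (le_of_eq hx.symm) hRHS
      set c0 : C := mld p C ((w : Fin n → ZMod 2) + x) with hc0
      set c1 : C := c0 + w with hc1
      have hc1ne : (c1 : Fin n → ZMod 2) ≠ 0 := by
        intro hz
        apply h
        show (mld p C ((w : Fin n → ZMod 2) + x) : Fin n → ZMod 2) = (w : Fin n → ZMod 2)
        have hz' : (c0 : Fin n → ZMod 2) + (w : Fin n → ZMod 2) = 0 := hz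
        have h3 := congrArg (· + (w : Fin n → ZMod 2)) hz'
        simpa [add_assoc, zmod2_add_self] using h3
      have hle : Pn p x ≤ Pn p (x + (c1 : Fin n → ZMod 2)) := by
        have h2 := mld_spec p C ((w : Fin n → ZMod 2) + x) w
        have e1 : (w : Fin n → ZMod 2) + x + (w : Fin n → ZMod 2) = x := by
          rw [add_comm (w : Fin n → ZMod 2) x, add_assoc, zmod2_add_self, add_zero]
        have e2 : (w : Fin n → ZMod 2) + x + (c0 : Fin n → ZMod 2)
            = x + (c1 : Fin n → ZMod 2) := by
          show _ = x + ((c0 : Fin n → ZMod 2) + (w : Fin n → ZMod 2))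
          ring
        rw [e1, e2] at h2
        exact h2
      have hsum : Pn p (x + (c1 : Fin n → ZMod 2)) ^ a ≤
          ∑ c : C, if (c : Fin n → ZMod 2) ≠ 0
            then Pn p (x + (c : Fin n → ZMod 2)) ^ a else 0 := by
        have := Finset.single_le_sum (f := fun c : C =>
            if (c : Fin n → ZMod 2) ≠ 0 then Pn p (x + (c : Fin n → ZMod 2)) ^ a else 0)
          (fun c _ => by
            split <;>
              [exact Real.rpow_nonneg (Pn_nonneg hp0 hp1 _) _; rfl])
          (Finset.mem_univ c1)
        simpa [hc1ne] using this
      have hxa : Pn p x ^ a ≤ Pn p (x + (c1 : Fin n → ZMod 2)) ^ a :=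
        Real.rpow_le_rpow hx.le hle ha.le
      calc Pn p x = Pn p x ^ a * (Pn p x ^ a) ^ s := by
            have hone : a + a * s = 1 := by rw [ha_def]; field_simp
            rw [← Real.rpow_mul hx.le, ← Real.rpow_add hx, hone, Real.rpow_one]
          _ ≤ _ := by
            apply mul_le_mul_of_nonneg_left _ (Real.rpow_nonneg (Pn_nonneg hp0 hp1 _) _)
            exact Real.rpow_le_rpow (Real.rpow_nonneg (Pn_nonneg hp0 hp1 _) _)
              (hxa.trans hsum) hs0
  have hcard : (0:ℝ) < (Nat.card C : ℝ) := by
    have : 0 < Nat.card C := Nat.card_pos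
    exact_mod_cast this
  have h2 : ∑ w : C, ∑ x : Fin n → ZMod 2,
      (if dec ((w : Fin n → ZMod 2) + x) ≠ (w : Fin n → ZMod 2) then Pn p x else 0) ≤
      ∑ _w : C, ∑ x : Fin n → ZMod 2, Pn p x ^ a *
        (∑ c : C, if (c : Fin n → ZMod 2) ≠ 0
          then Pn p (x + (c : Fin n → ZMod 2)) ^ a else 0) ^ s :=
    Finset.sum_le_sum fun w _ => Finset.sum_le_sum fun x _ => key w x
  have h3 := mul_le_mul_of_nonneg_left h2 (le_of_lt (by positivity :
    (0:ℝ) < 1 / (Nat.card C : ℝ)))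
  refine h3.trans_eq ?_
  rw [Finset.sum_const, Finset.card_univ, nsmul_eq_mul, ← mul_assoc,
    ← Nat.card_eq_fintype_card, one_div, inv_mul_cancel₀ (ne_of_gt hcard), one_mul]

lemma jensen' {I : Type*} [Fintype I] [Nonempty I] (Z : I → ℝ) (hZ : ∀ r, 0 ≤ Z r)
    {s : ℝ} (hs0 : 0 ≤ s) (hs1 : s ≤ 1) :
    (∑ r, Z r ^ s) / (Fintype.card I : ℝ) ≤ ((∑ r, Z r) / (Fintype.card I : ℝ)) ^ s := by
  have hcI : (0:ℝ) < (Fintype.card I : ℝ) := by exact_mod_cast Fintype.card_pos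
  rcases eq_or_lt_of_le hs0 with h0 | hspos
  · rw [← h0]
    simp only [Real.rpow_zero]
    rw [Finset.sum_const, Finset.card_univ, nsmul_eq_mul, mul_one, div_self hcI.ne']
  · have h := Real.arith_mean_le_rpow_mean (Finset.univ)
      (fun _ => (Fintype.card I : ℝ)⁻¹) (fun r => Z r ^ s)
      (fun i _ => by positivity)
      (by rw [Finset.sum_const, Finset.card_univ, nsmul_eq_mul, mul_inv_cancel₀ hcI.ne'])
      (fun i _ => Real.rpow_nonneg (hZ i) s)
      (p := 1/s) (by rw [le_div_iff₀ hspos]; linarith)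
    have e1 : ∀ r : I, (Z r ^ s) ^ (1/s : ℝ) = Z r := fun r => by
      rw [← Real.rpow_mul (hZ r), mul_one_div, div_self hspos.ne', Real.rpow_one]
    rw [one_div_one_div] at h
    simp_rw [e1] at h
    rw [← Finset.mul_sum, ← Finset.mul_sum] at h
    rw [div_eq_inv_mul, div_eq_inv_mul]
    exact h

lemma final_algebra {p ε s : ℝ} (hε : 0 < ε) {n t : ℕ} (hn : 0 < n)
    (hs1' : (0:ℝ) < 1 + s)
    (hc : 0 < p ^ (1/(1+s) : ℝ) + (1-p) ^ (1/(1+s) : ℝ)) :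
    (p ^ (1/(1+s) : ℝ) + (1-p) ^ (1/(1+s) : ℝ)) ^ n *
      ((2:ℝ)^t / 2^n * ε * (p ^ (1/(1+s) : ℝ) + (1-p) ^ (1/(1+s) : ℝ)) ^ n) ^ s
      = ε ^ s * (2:ℝ) ^ (-((n:ℝ) * (-s * ((t:ℝ)/n) + E0 s p))) := by
  have hn' : ((n:ℝ)) ≠ 0 := by positivity
  have h2 : (0:ℝ) < 2 := two_pos
  set c : ℝ := p ^ (1/(1+s) : ℝ) + (1-p) ^ (1/(1+s) : ℝ) with hc_def
  have hB : (0:ℝ) < c ^ (1+s : ℝ) := Real.rpow_pos_of_pos hc _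
  have e1 : -((n:ℝ) * (-s * ((t:ℝ)/n) + E0 s p)) =
      s * ((t:ℝ) - (n:ℝ)) + (n:ℝ) * Real.logb 2 (c ^ (1+s : ℝ)) := by
    rw [E0, ← hc_def]
    field_simp
    ring
  rw [e1, Real.rpow_add h2, mul_comm ((n:ℝ)) _,
    Real.rpow_mul h2.le (Real.logb 2 (c ^ (1+s:ℝ))) ((n:ℝ)),
    Real.rpow_logb h2 (by norm_num) hB, Real.rpow_natCast]
  have hcn : (0:ℝ) ≤ c ^ n := by positivity
  rw [Real.mul_rpow (by positivity) hcn, Real.mul_rpow (by positivity) hε.le]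
  have l1 : ((2:ℝ)^t / 2^n) ^ s = (2:ℝ) ^ (s * ((t:ℝ) - (n:ℝ))) := by
    rw [← Real.rpow_natCast 2 t, ← Real.rpow_natCast 2 n, ← Real.rpow_sub h2,
      ← Real.rpow_mul h2.le, mul_comm]
  have l2 : c ^ n * (c ^ n) ^ s = (c ^ (1+s : ℝ)) ^ n := by
    rw [← Real.rpow_natCast c n, ← Real.rpow_mul hc.le, ← Real.rpow_add hc,
      ← Real.rpow_natCast (c ^ ((1:ℝ)+s)) n, ← Real.rpow_mul hc.le]
    congr 1; ring
  calc c ^ n * (((2:ℝ)^t / 2^n) ^ s * ε ^ s * (c ^ n) ^ s)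
      = ε ^ s * (((2:ℝ)^t / 2^n) ^ s * (c ^ n * (c ^ n) ^ s)) := by ring
    _ = ε ^ s * ((2:ℝ) ^ (s * ((t:ℝ) - (n:ℝ))) * (c ^ (1+s:ℝ)) ^ n) := by rw [l1, l2]

/-- Gallager bound for `ε`-almost universal₂ families: for every `0 ≤ s ≤ 1`,
`E_r[P_e(C_r)] ≤ ε^s · 2^{-n(-sR + E₀(s,p))}` with `R = t_max/n`. -/
theorem stmt12 {n t : ℕ} (hn : 0 < n) {I : Type*} [Fintype I] [Nonempty I]
    (C : I → Submodule (ZMod 2) (Fin n → ZMod 2)) (p ε : ℝ)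
    (hp0 : 0 ≤ p) (hp1 : p ≤ 1) (hε : 1 ≤ ε)
    (hdim : ∀ r, Module.finrank (ZMod 2) (C r) ≤ t)
    (huniv : ∀ y : Fin n → ZMod 2, y ≠ 0 →
      ((Finset.univ.filter (fun r => y ∈ C r)).card : ℝ) / (Fintype.card I : ℝ) ≤
        (2 : ℝ) ^ t / 2 ^ n * ε) :
    ∀ s : ℝ, 0 ≤ s → s ≤ 1 →
      (∑ r : I, Pe p (C r)) / (Fintype.card I : ℝ) ≤
        ε ^ s * (2 : ℝ) ^ (-((n : ℝ) * (-s * ((t : ℝ) / n) + E0 s p))) := by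
  intro s hs0 hs1
  have hq : (0:ℝ) ≤ 1 - p := by linarith
  have hε0 : (0:ℝ) < ε := by linarith
  have hs1' : (0:ℝ) < 1 + s := by linarith
  set a : ℝ := 1/(1+s) with ha_def
  have ha : 0 < a := by positivity
  have hcI : (0:ℝ) < (Fintype.card I : ℝ) := by exact_mod_cast Fintype.card_pos
  have hcpos : (0:ℝ) < p ^ a + (1 - p) ^ a := by
    rcases eq_or_lt_of_le hp0 with h | h
    · rw [← h, Real.zero_rpow ha.ne', zero_add, sub_zero, Real.one_rpow]; norm_num
    · exact add_pos_of_pos_of_nonneg (Real.rpow_pos_of_pos h a) (Real.rpow_nonneg hq a)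
  -- the inner sum
  set U : I → (Fin n → ZMod 2) → ℝ := fun r x => ∑ cc : (C r),
    if (cc : Fin n → ZMod 2) ≠ 0 then Pn p (x + (cc : Fin n → ZMod 2)) ^ a else 0 with hU
  have hU0 : ∀ r x, 0 ≤ U r x := fun r x => by
    simp only [hU]
    exact Finset.sum_nonneg fun cc _ => by
      split <;> [exact Real.rpow_nonneg (Pn_nonneg hp0 hp1 _) _; rfl]
  set K : ℝ := (2:ℝ)^t / 2^n * ε * (p ^ a + (1 - p) ^ a) ^ n with hK_def
  have hK0 : 0 ≤ K := by positivity
  -- step 1: Gallager bound for each r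
  have h1 : (∑ r, Pe p (C r)) / (Fintype.card I : ℝ) ≤
      (∑ r, ∑ x : Fin n → ZMod 2, Pn p x ^ a * (U r x) ^ s) / (Fintype.card I : ℝ) := by
    gcongr with r hr
    simp only [hU, ha_def]
    exact gallager hp0 hp1 (C r) hs0
  refine h1.trans ?_
  -- step 2: swap sums, factor
  have h2 : (∑ r, ∑ x : Fin n → ZMod 2, Pn p x ^ a * (U r x) ^ s) =
      ∑ x : Fin n → ZMod 2, Pn p x ^ a * ∑ r, (U r x) ^ s := by
    rw [Finset.sum_comm]
    exact Finset.sum_congr rfl fun x _ => by rw [Finset.mul_sum]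
  -- step D: the universal-family bound
  have hD : ∀ x : Fin n → ZMod 2, (∑ r, U r x) / (Fintype.card I : ℝ) ≤ K := by
    intro x
    have hre : ∀ r, U r x = ∑ y : Fin n → ZMod 2,
        if y ∈ C r then (if y ≠ 0 then Pn p (x + y) ^ a else 0) else 0 := by
      intro r
      rw [← Finset.sum_filter]
      exact (Finset.sum_subtype _ (fun y => by simp)
        (fun y => if y ≠ 0 then Pn p (x + y) ^ a else 0)).symm
    have hswap : ∑ r, U r x = ∑ y : Fin n → ZMod 2,
        (if y ≠ 0 then ((Finset.univ.filter (fun r => y ∈ C r)).card : ℝ)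
          * Pn p (x + y) ^ a else 0) := by
      simp_rw [hre]
      rw [Finset.sum_comm]
      refine Finset.sum_congr rfl fun y _ => ?_
      rw [Finset.sum_ite, Finset.sum_const, Finset.sum_const_zero, add_zero,
        nsmul_eq_mul]
      split
      · rfl
      · exact mul_zero _
    rw [hswap, Finset.sum_div]
    have hterm : ∀ y : Fin n → ZMod 2,
        (if y ≠ 0 then ((Finset.univ.filter (fun r => y ∈ C r)).card : ℝ)
          * Pn p (x + y) ^ a else 0) / (Fintype.card I : ℝ) ≤
        ((2:ℝ)^t / 2^n * ε) * Pn p (x + y) ^ a := by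
      intro y
      split
      case isTrue hy =>
        rw [div_eq_mul_inv, mul_right_comm, ← div_eq_mul_inv]
        exact mul_le_mul_of_nonneg_right (huniv y hy)
          (Real.rpow_nonneg (Pn_nonneg hp0 hp1 _) _)
      case isFalse hy =>
        rw [zero_div]
        exact mul_nonneg (by positivity) (Real.rpow_nonneg (Pn_nonneg hp0 hp1 _) _)
    refine (Finset.sum_le_sum fun y _ => hterm y).trans ?_
    rw [← Finset.mul_sum]
    have hsub : ∑ y : Fin n → ZMod 2, Pn p (x + y) ^ a
        = ∑ z : Fin n → ZMod 2, Pn p z ^ a :=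
      Fintype.sum_equiv (Equiv.addLeft x) _ _ (fun y => rfl)
    rw [hsub, sum_Pn_rpow hp0 hp1 ha, hK_def, mul_assoc]
  -- step 3: Jensen
  have h3 : ∀ x : Fin n → ZMod 2, (∑ r, (U r x) ^ s) / (Fintype.card I : ℝ) ≤ K ^ s := by
    intro x
    refine (jensen' (fun r => U r x) (fun r => hU0 r x) hs0 hs1).trans ?_
    exact Real.rpow_le_rpow
      (div_nonneg (Finset.sum_nonneg fun r _ => hU0 r x) hcI.le) (hD x) hs0
  -- combine
  have h4 : (∑ x : Fin n → ZMod 2, Pn p x ^ a * ∑ r, (U r x) ^ s) / (Fintype.card I : ℝ)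
      ≤ ∑ x : Fin n → ZMod 2, Pn p x ^ a * K ^ s := by
    rw [Finset.sum_div]
    refine Finset.sum_le_sum fun x _ => ?_
    rw [mul_div_assoc]
    exact mul_le_mul_of_nonneg_left (h3 x) (Real.rpow_nonneg (Pn_nonneg hp0 hp1 _) _)
  rw [h2]
  refine h4.trans ?_
  rw [← Finset.sum_mul, sum_Pn_rpow hp0 hp1 ha]
  rw [hK_def]
  exact le_of_eq (final_algebra hε0 hn hs1' hcpos)
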